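/- Let R be a Noetherian local ring, let X be a class of R-modules closed under isomorphisms and closed two-out-of-three in short exact sequences. Let M, N be finitely generated R-modules and n ≥ 0 an integer. If N ∈ X and Ext^i_R(M,N) ∈ X for all 0 ≤ i ≤ n, then Hom_R(Ω^i(M), N) ∈ X for all 0 ≤ i ≤ n, where Ω^i(M) denotes the i-th syzygy of M in a minimal free resolution. -/

import Mathlib

open CategoryTheory

/-- The Ext module `Ext^i_R(M,N)` as an object of `ModuleCat R`. -/
noncomputable def extMod (R : Type) [CommRing R] (M N : Type) [AddCommGroup M] [Module R M]
    [AddCommGroup N] [Module R N] (i : ℕ) : ModuleCat R :=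
  ((Ext R (ModuleCat R) i).obj (Opposite.op (ModuleCat.of R M))).obj (ModuleCat.of R N)

/-- `pd_R(M) ≤ n`, via vanishing of `Ext^i(M,-)` for `i > n`. -/
def projDimLE (R : Type) [CommRing R] (M : Type) [AddCommGroup M] [Module R M] (n : ℕ) : Prop :=
  ∀ (N : Type) [AddCommGroup N] [Module R N] (i : ℕ), n < i → Subsingleton (extMod R M N i)

/-- The projective dimension of `M`, as an element of `ℕ∞` (`⊤` if infinite). -/
noncomputable def projDim (R : Type) [CommRing R] (M : Type) [AddCommGroup M] [Module R M] :
    ℕ∞ :=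
  sInf {n : ℕ∞ | ∃ m : ℕ, n = m ∧ projDimLE R M m}

/-- `id_R(M) ≤ n`, via vanishing of `Ext^i(-,M)` for `i > n`. -/
def injDimLE (R : Type) [CommRing R] (M : Type) [AddCommGroup M] [Module R M] (n : ℕ) : Prop :=
  ∀ (N : Type) [AddCommGroup N] [Module R N] (i : ℕ), n < i → Subsingleton (extMod R N M i)

/-- The injective dimension of `M`, as an element of `ℕ∞` (`⊤` if infinite). -/
noncomputable def injDim (R : Type) [CommRing R] (M : Type) [AddCommGroup M] [Module R M] :
    ℕ∞ :=
  sInf {n : ℕ∞ | ∃ m : ℕ, n = m ∧ injDimLE R M m}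

/-- The depth of a module over a Noetherian local ring, via `inf { i | Ext^i(k, M) ≠ 0 }`. -/
noncomputable def rdepth (R : Type) [CommRing R] [IsLocalRing R] (M : Type) [AddCommGroup M]
    [Module R M] : ℕ∞ :=
  sInf {n : ℕ∞ | ∃ m : ℕ, n = m ∧
    ¬ Subsingleton (extMod R (R ⧸ IsLocalRing.maximalIdeal R) M m)}

/-- A Noetherian local ring is Cohen–Macaulay if its depth equals its Krull dimension. -/
def IsCMLocalRing (R : Type) [CommRing R] [IsLocalRing R] : Prop :=
  (rdepth R R : WithBot ℕ∞) = ringKrullDim R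

/-- A Gorenstein local ring: `R` has finite injective dimension over itself. -/
def IsGorensteinLocalRing (R : Type) [CommRing R] [IsLocalRing R] : Prop :=
  injDim R R ≠ ⊤

/-- The minimal number of generators of a module, as an element of `ℕ∞`. -/
noncomputable def minGen (R : Type) [CommRing R] (M : Type) [AddCommGroup M] [Module R M] :
    ℕ∞ :=
  sInf {n : ℕ∞ | ∃ m : ℕ, n = m ∧
    ∃ f : Fin m → M, Submodule.span R (Set.range f) = ⊤}

/-- `ω` is a canonical (dualizing) module over the local ring `R`: it is finitely generated,
of finite injective dimension, the natural map `R → Hom_R(ω,ω)` is bijective, and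
`Ext^i(ω,ω) = 0` for `i > 0`. -/
def IsCanonicalModule (R : Type) [CommRing R] [IsLocalRing R] (ω : Type) [AddCommGroup ω]
    [Module R ω] : Prop :=
  Module.Finite R ω ∧ injDim R ω ≠ ⊤ ∧
    Function.Bijective (fun r : R => (r • LinearMap.id : ω →ₗ[R] ω)) ∧
    ∀ i : ℕ, 0 < i → Subsingleton (extMod R ω ω i)

namespace Stmt11Aux

variable {R : Type} [CommRing R]

lemma aux_ses (𝒳 : ModuleCat R → Prop)
    (hses : ∀ S : ShortComplex (ModuleCat R), S.ShortExact →
      ((𝒳 S.X₁ → 𝒳 S.X₂ → 𝒳 S.X₃) ∧ (𝒳 S.X₁ → 𝒳 S.X₃ → 𝒳 S.X₂) ∧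
        (𝒳 S.X₂ → 𝒳 S.X₃ → 𝒳 S.X₁)))
    {A B C : Type} [AddCommGroup A] [Module R A] [AddCommGroup B] [Module R B]
    [AddCommGroup C] [Module R C]
    (f : A →ₗ[R] B) (g : B →ₗ[R] C) (hf : Function.Injective f)
    (hg : Function.Surjective g) (hfg : LinearMap.range f = LinearMap.ker g) :
    (𝒳 (ModuleCat.of R A) → 𝒳 (ModuleCat.of R B) → 𝒳 (ModuleCat.of R C)) ∧
    (𝒳 (ModuleCat.of R A) → 𝒳 (ModuleCat.of R C) → 𝒳 (ModuleCat.of R B)) ∧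
    (𝒳 (ModuleCat.of R B) → 𝒳 (ModuleCat.of R C) → 𝒳 (ModuleCat.of R A)) := by
  have h0 : g.comp f = 0 := by
    ext x
    have hx : f x ∈ LinearMap.ker g := by rw [← hfg]; exact ⟨x, rfl⟩
    simpa using hx
  have hmono : Mono (ShortComplex.moduleCatMk f g h0).f :=
    (ModuleCat.mono_iff_injective _).2 hf
  have hepi : Epi (ShortComplex.moduleCatMk f g h0).g :=
    (ModuleCat.epi_iff_surjective _).2 hg
  have hexact : (ShortComplex.moduleCatMk f g h0).Exact := by
    rw [ShortComplex.moduleCat_exact_iff_range_eq_ker]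
    exact hfg
  exact hses _ { exact := hexact, mono_f := hmono, epi_g := hepi }

lemma aux_equiv (𝒳 : ModuleCat R → Prop)
    (hiso : ∀ A B : ModuleCat R, Nonempty (A ≅ B) → 𝒳 A → 𝒳 B)
    {A B : Type} [AddCommGroup A] [Module R A] [AddCommGroup B] [Module R B]
    (e : A ≃ₗ[R] B) (hA : 𝒳 (ModuleCat.of R A)) : 𝒳 (ModuleCat.of R B) :=
  hiso _ _ ⟨e.toModuleIso⟩ hA

lemma aux_fin (𝒳 : ModuleCat R → Prop)
    (hiso : ∀ A B : ModuleCat R, Nonempty (A ≅ B) → 𝒳 A → 𝒳 B)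
    (hses : ∀ S : ShortComplex (ModuleCat R), S.ShortExact →
      ((𝒳 S.X₁ → 𝒳 S.X₂ → 𝒳 S.X₃) ∧ (𝒳 S.X₁ → 𝒳 S.X₃ → 𝒳 S.X₂) ∧
        (𝒳 S.X₂ → 𝒳 S.X₃ → 𝒳 S.X₁)))
    {N : Type} [AddCommGroup N] [Module R N] (hN : 𝒳 (ModuleCat.of R N))
    (m : ℕ) : 𝒳 (ModuleCat.of R (Fin m → N)) := by
  induction m with
  | zero =>
    refine (aux_ses 𝒳 hses (LinearMap.id : N →ₗ[R] N)
      (0 : N →ₗ[R] (Fin 0 → N)) (fun a b h => h) (fun y => ⟨0, Subsingleton.elim _ _⟩)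
      ?_).1 hN hN
    ext x
    simp [LinearMap.mem_ker]
  | succ m ih =>
    have h1 : 𝒳 (ModuleCat.of R (N × (Fin m → N))) :=
      (aux_ses 𝒳 hses (LinearMap.inl R N (Fin m → N))
        (LinearMap.snd R N (Fin m → N)) LinearMap.inl_injective
        (fun y => ⟨(0, y), rfl⟩) (LinearMap.range_inl R N (Fin m → N))).2.1 hN ih
    refine aux_equiv 𝒳 hiso (LinearEquiv.symm ?_) h1
    exact
      { toFun := fun f => (f 0, fun i => f i.succ)
        invFun := fun p => Fin.cons p.1 p.2
        map_add' := fun f g => rfl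
        map_smul' := fun c f => rfl
        left_inv := fun f => by
          funext i
          refine Fin.cases ?_ (fun j => ?_) i <;> simp
        right_inv := fun p => by
          refine Prod.ext ?_ (funext fun i => ?_) <;> simp }

lemma aux_free (𝒳 : ModuleCat R → Prop)
    (hiso : ∀ A B : ModuleCat R, Nonempty (A ≅ B) → 𝒳 A → 𝒳 B)
    (hses : ∀ S : ShortComplex (ModuleCat R), S.ShortExact →
      ((𝒳 S.X₁ → 𝒳 S.X₂ → 𝒳 S.X₃) ∧ (𝒳 S.X₁ → 𝒳 S.X₃ → 𝒳 S.X₂) ∧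
        (𝒳 S.X₂ → 𝒳 S.X₃ → 𝒳 S.X₁)))
    {N : Type} [AddCommGroup N] [Module R N] (hN : 𝒳 (ModuleCat.of R N))
    (A : Type) [AddCommGroup A] [Module R A] [Module.Free R A] [Module.Finite R A] :
    𝒳 (ModuleCat.of R (A →ₗ[R] N)) := by
  classical
  have h1 := aux_fin 𝒳 hiso hses hN (Fintype.card (Module.Free.ChooseBasisIndex R A))
  have h2 : 𝒳 (ModuleCat.of R (Module.Free.ChooseBasisIndex R A → N)) :=
    aux_equiv 𝒳 hiso (LinearEquiv.piCongrLeft' R (fun _ => N)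
      (Fintype.equivFin (Module.Free.ChooseBasisIndex R A))).symm h1
  exact aux_equiv 𝒳 hiso ((Module.Free.chooseBasis R A).constr R) h2

/-- If `p : A → B` is surjective with kernel `range q`, then `Hom(B,N)` is the kernel of
precomposition with `q` on `Hom(A,N)`. -/
noncomputable def homEquivKer (N : Type) [AddCommGroup N] [Module R N]
    {A B C₀ : Type} [AddCommGroup A] [Module R A] [AddCommGroup B]
    [Module R B] [AddCommGroup C₀] [Module R C₀] (p : A →ₗ[R] B) (q : C₀ →ₗ[R] A)
    (hp : Function.Surjective p) (hqp : LinearMap.ker p = LinearMap.range q) :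
    (B →ₗ[R] N) ≃ₗ[R] LinearMap.ker (LinearMap.lcomp R N q) := by
  have hcod : ∀ g : B →ₗ[R] N, LinearMap.lcomp R N p g ∈ LinearMap.ker (LinearMap.lcomp R N q) := by
    intro g
    rw [LinearMap.mem_ker]
    ext c
    show g (p (q c)) = 0
    have h1 : q c ∈ LinearMap.ker p := by rw [hqp]; exact ⟨c, rfl⟩
    rw [LinearMap.mem_ker] at h1
    rw [h1, map_zero]
  refine LinearEquiv.ofBijective
    (LinearMap.codRestrict _ (LinearMap.lcomp R N p) hcod) ⟨?_, ?_⟩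
  · intro g₁ g₂ h
    have h' : g₁.comp p = g₂.comp p := congrArg Subtype.val h
    ext b
    obtain ⟨a, rfl⟩ := hp b
    exact congrArg (fun φ => φ a) h'
  · rintro ⟨f, hf⟩
    rw [LinearMap.mem_ker] at hf
    have hker : LinearMap.ker p ≤ LinearMap.ker f := by
      rw [hqp]
      rintro x ⟨c, rfl⟩
      exact congrArg (fun φ => φ c) hf
    refine ⟨((LinearMap.ker p).liftQ f hker).comp
      (LinearMap.quotKerEquivOfSurjective p hp).symm.toLinearMap, ?_⟩
    apply Subtype.ext
    show (((LinearMap.ker p).liftQ f hker).comp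
      (LinearMap.quotKerEquivOfSurjective p hp).symm.toLinearMap).comp p = f
    have hmk : (LinearMap.quotKerEquivOfSurjective p hp).symm.toLinearMap.comp p
        = (LinearMap.ker p).mkQ := by
      ext a
      show (LinearMap.quotKerEquivOfSurjective p hp).symm (p a) = Submodule.Quotient.mk a
      rw [LinearEquiv.symm_apply_eq]
      simp [LinearMap.quotKerEquivOfSurjective, LinearEquiv.trans_apply,
        LinearMap.quotKerEquivRange_apply_mk]
    rw [LinearMap.comp_assoc, hmk, Submodule.liftQ_mkQ]



section Res
variable {R : Type} [CommRing R] {M : Type} [AddCommGroup M] [Module R M]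
  (F : ℕ → Type) [∀ i, AddCommGroup (F i)] [∀ i, Module R (F i)]
  [∀ i, Module.Free R (F i)]
  (d : ∀ i : ℕ, F (i + 1) →ₗ[R] F i) (ε : F 0 →ₗ[R] M)
  (hε : Function.Surjective ε) (hex0 : Function.Exact (d 0) ε)
  (hex : ∀ i : ℕ, Function.Exact (d (i + 1)) (d i))
  (N : Type) [AddCommGroup N] [Module R N]

omit [∀ i, Module.Free R (F i)] in
include hex in
lemma aux_dd (i : ℕ) : (LinearMap.lcomp R N (d (i + 1))).comp (LinearMap.lcomp R N (d i)) = 0 := by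
  ext f x
  show f (d i (d (i + 1) x)) = 0
  rw [(hex i).apply_apply_eq_zero, map_zero]

noncomputable def resComplex : ChainComplex (ModuleCat R) ℕ :=
  ChainComplex.of (fun i => ModuleCat.of R (F i)) (fun i => ModuleCat.ofHom (d i))
    (fun i => by ext x; exact (hex i).apply_apply_eq_zero x)

omit [∀ i, Module.Free R (F i)] in
lemma resComplex_d (n : ℕ) : (resComplex F d hex).d (n + 1) n = ModuleCat.ofHom (d n) :=
  ChainComplex.of_d (fun i => ModuleCat.of R (F i)) (fun i => ModuleCat.ofHom (d i)) n

omit [∀ i, Module.Free R (F i)] in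
lemma resComplex_exactAt_succ (n : ℕ) : (resComplex F d hex).ExactAt (n + 1) := by
  rw [HomologicalComplex.exactAt_iff' _ (n + 1 + 1) (n + 1) n (by simp) (by simp)]
  dsimp [resComplex, HomologicalComplex.sc', HomologicalComplex.shortComplexFunctor']
  simp only [ChainComplex.of_d]
  rw [ShortComplex.moduleCat_exact_iff]
  intro x hx
  exact (hex n x).mp hx

noncomputable def resolution : ProjectiveResolution (ModuleCat.of R M) where
  complex := resComplex F d hex
  projective n := (IsProjective.iff_projective _).mp inferInstance
  π := (ChainComplex.toSingle₀Equiv _ _).symm ⟨ModuleCat.ofHom ε, by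
    ext x; exact hex0.apply_apply_eq_zero x⟩
  quasiIso := ⟨fun n => by
    cases n
    · rw [ChainComplex.quasiIsoAt₀_iff, ShortComplex.quasiIso_iff_of_zeros']
      · have hS1 : (ShortComplex.moduleCatMk (R := R) (d 0) ε
            (by ext x; exact hex0.apply_apply_eq_zero x)).Exact := by
          rw [ShortComplex.moduleCat_exact_iff]
          intro x hx
          exact (hex0 x).mp hx
        have hepi : Epi (ShortComplex.moduleCatMk (R := R) (d 0) ε
            (by ext x; exact hex0.apply_apply_eq_zero x)).g := by
          rw [ModuleCat.epi_iff_surjective]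
          exact hε
        refine (ShortComplex.exact_and_epi_g_iff_of_iso ?_).2 ⟨hS1, hepi⟩
        refine ShortComplex.isoMk (Iso.refl _) (Iso.refl _) (Iso.refl _)
          (by dsimp [ShortComplex.moduleCatMk]
              exact (Category.id_comp _).trans
                ((resComplex_d F d hex 0).symm.trans (Category.comp_id _).symm)) ?_
        · dsimp [ShortComplex.moduleCatMk]
          exact (Category.id_comp _).trans
            ((ChainComplex.toSingle₀Equiv_symm_apply_f_zero (C := resComplex F d hex)
              (X := ModuleCat.of R M) (ModuleCat.ofHom ε) _).symm.trans (Category.comp_id _).symm)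
      all_goals rfl
    · rw [quasiIsoAt_iff_exactAt']
      · apply resComplex_exactAt_succ
      · apply ChainComplex.exactAt_succ_single_obj⟩

noncomputable def resYoneda : CochainComplex (ModuleCat R) ℕ :=
  (resComplex F d hex).linearYonedaObj R (ModuleCat.of R N)

omit [∀ i, Module.Free R (F i)] in
lemma resYoneda_d (j : ℕ) (f : (resYoneda F d hex N).X j) : (resYoneda F d hex N).d j (j + 1) f
    = ModuleCat.ofHom (d j) ≫ f := by
  change (resComplex F d hex).d (j + 1) j ≫ f = _
  rw [resComplex_d]
  rfl

/-- The short complex `Hom(F j, N) → Hom(F (j+1), N) → Hom(F (j+2), N)`. -/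
noncomputable def scMk (j : ℕ) : ShortComplex (ModuleCat R) :=
  ShortComplex.moduleCatMk (LinearMap.lcomp R N (d j)) (LinearMap.lcomp R N (d (j + 1)))
    (aux_dd F d hex N j)

/-- The short complex `Hom(F 0, N) → Hom(F 0, N) → Hom(F 1, N)` with first map zero. -/
noncomputable def scMk0 : ShortComplex (ModuleCat R) :=
  ShortComplex.moduleCatMk (0 : (F 0 →ₗ[R] N) →ₗ[R] (F 0 →ₗ[R] N))
    (LinearMap.lcomp R N (d 0)) (by ext f; simp)

noncomputable def isoSc (j : ℕ) : (resYoneda F d hex N).sc (j + 1) ≅ scMk F d hex N j :=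
  ((HomologicalComplex.natIsoSc' (ModuleCat R) (ComplexShape.up ℕ) j (j + 1) (j + 2)
      (by simp) (by simp)).app (resYoneda F d hex N)) ≪≫
    ShortComplex.isoMk (ModuleCat.homLinearEquiv (S := R)).toModuleIso
      (ModuleCat.homLinearEquiv (S := R)).toModuleIso (ModuleCat.homLinearEquiv (S := R)).toModuleIso
      (by ext f
          change LinearMap.lcomp R N (d j) f.hom = ((resYoneda F d hex N).d j (j + 1) f).hom
          exact (congrArg ModuleCat.Hom.hom (resYoneda_d F d hex N j f)).symm)
      (by ext f
          change LinearMap.lcomp R N (d (j + 1)) f.hom = ((resYoneda F d hex N).d (j + 1) (j + 1 + 1) f).hom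
          exact (congrArg ModuleCat.Hom.hom (resYoneda_d F d hex N (j + 1) f)).symm)

noncomputable def isoSc0 : (resYoneda F d hex N).sc 0 ≅ scMk0 F d N :=
  ((HomologicalComplex.natIsoSc' (ModuleCat R) (ComplexShape.up ℕ) 0 0 1
      (by exact CochainComplex.prev_nat_zero) (by simp)).app (resYoneda F d hex N)) ≪≫
    ShortComplex.isoMk (ModuleCat.homLinearEquiv (S := R)).toModuleIso
      (ModuleCat.homLinearEquiv (S := R)).toModuleIso (ModuleCat.homLinearEquiv (S := R)).toModuleIso
      (by ext f
          change (0 : (F 0 →ₗ[R] N) →ₗ[R] (F 0 →ₗ[R] N)) f.hom = ((resYoneda F d hex N).d 0 0 f).hom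
          rw [HomologicalComplex.shape (resYoneda F d hex N) 0 0 (by decide)]
          rfl)
      (by ext f
          change LinearMap.lcomp R N (d 0) f.hom = ((resYoneda F d hex N).d 0 (0 + 1) f).hom
          exact (congrArg ModuleCat.Hom.hom (resYoneda_d F d hex N 0 f)).symm)

end Res

section Ext
variable {R : Type} [CommRing R] {M : Type} [AddCommGroup M] [Module R M]
  (F : ℕ → Type) [∀ i, AddCommGroup (F i)] [∀ i, Module R (F i)]
  [∀ i, Module.Free R (F i)] [∀ i, Module.Finite R (F i)]
  (d : ∀ i : ℕ, F (i + 1) →ₗ[R] F i) (ε : F 0 →ₗ[R] M)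
  (hε : Function.Surjective ε) (hex0 : Function.Exact (d 0) ε)
  (hex : ∀ i : ℕ, Function.Exact (d (i + 1)) (d i))
  (N : Type) [AddCommGroup N] [Module R N]

/-- `Ext^k(M,N)` computed as the homology of the dual complex. -/
noncomputable def extIso (k : ℕ) :
    ((Ext R (ModuleCat R) k).obj (Opposite.op (ModuleCat.of R M))).obj (ModuleCat.of R N) ≅
      ((resYoneda F d hex N).sc k).homology :=
  (resolution F d ε hε hex0 hex).isoExt k (ModuleCat.of R N)

end Ext
end Stmt11Aux


open CategoryTheory

theorem stmt_11 (R : Type) [CommRing R] [IsNoetherianRing R] [IsLocalRing R]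
    (𝒳 : ModuleCat R → Prop)
    (hiso : ∀ A B : ModuleCat R, Nonempty (A ≅ B) → 𝒳 A → 𝒳 B)
    (hses : ∀ S : ShortComplex (ModuleCat R), S.ShortExact →
      ((𝒳 S.X₁ → 𝒳 S.X₂ → 𝒳 S.X₃) ∧ (𝒳 S.X₁ → 𝒳 S.X₃ → 𝒳 S.X₂) ∧
        (𝒳 S.X₂ → 𝒳 S.X₃ → 𝒳 S.X₁)))
    (M N : Type) [AddCommGroup M] [Module R M] [AddCommGroup N] [Module R N]
    [Module.Finite R M] [Module.Finite R N]
    (n : ℕ) (hN : 𝒳 (ModuleCat.of R N))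
    (hext : ∀ i : ℕ, i ≤ n → 𝒳 (extMod R M N i))
    -- a minimal free resolution `⋯ → F₁ → F₀ → M → 0` of `M`
    (F : ℕ → Type) [∀ i, AddCommGroup (F i)] [∀ i, Module R (F i)]
    [∀ i, Module.Free R (F i)] [∀ i, Module.Finite R (F i)]
    (d : ∀ i : ℕ, F (i + 1) →ₗ[R] F i) (ε : F 0 →ₗ[R] M)
    (hε : Function.Surjective ε) (hex0 : Function.Exact (d 0) ε)
    (hex : ∀ i : ℕ, Function.Exact (d (i + 1)) (d i))
    (hminε : LinearMap.ker ε ≤ IsLocalRing.maximalIdeal R • (⊤ : Submodule R (F 0)))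
    (hmin : ∀ i : ℕ, LinearMap.range (d i) ≤ IsLocalRing.maximalIdeal R • (⊤ : Submodule R (F i))) :
    -- `Hom(Ω⁰M, N) = Hom(M,N) ∈ 𝒳` and `Hom(Ω^{i+1}M, N) ∈ 𝒳` for `i+1 ≤ n`,
    -- where `Ω^{i+1}M = range (d i)`
    𝒳 (ModuleCat.of R (M →ₗ[R] N)) ∧
    ∀ i : ℕ, i + 1 ≤ n → 𝒳 (ModuleCat.of R (↥(LinearMap.range (d i)) →ₗ[R] N)) := by
  classical
  -- the kernels `K j = Hom(Ω^j M, N)` inside `Hom(F j, N)`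
  have key : ∀ j : ℕ, j ≤ n →
      𝒳 (ModuleCat.of R ↥(LinearMap.ker (LinearMap.lcomp R N (d j)))) := by
    intro j
    induction j with
    | zero =>
      intro _
      refine hiso _ _ ⟨?_⟩ (hext 0 (Nat.zero_le n))
      refine Stmt11Aux.extIso F d ε hε hex0 hex N 0 ≪≫
        ShortComplex.homologyMapIso (Stmt11Aux.isoSc0 F d hex N) ≪≫
        (Stmt11Aux.scMk0 F d N).moduleCatHomologyIso ≪≫ ?_
      have hbot : LinearMap.range ((Stmt11Aux.scMk0 F d N).moduleCatToCycles) = ⊥ := by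
        rw [LinearMap.range_eq_bot]
        ext x
        rfl
      exact (Submodule.quotEquivOfEqBot _ hbot).toModuleIso
    | succ i ih =>
      intro hi
      have hKi := ih (Nat.le_of_succ_le hi)
      have hFree : 𝒳 (ModuleCat.of R (F i →ₗ[R] N)) :=
        Stmt11Aux.aux_free 𝒳 hiso hses hN (F i)
      have hkertc : LinearMap.ker ((Stmt11Aux.scMk F d hex N i).moduleCatToCycles)
          = LinearMap.ker (LinearMap.lcomp R N (d i)) := by
        ext x
        rw [LinearMap.mem_ker]
        change _ ↔ LinearMap.lcomp R N (d i) x = 0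
        rw [← Subtype.coe_inj]
        exact Iff.rfl
      have hT : 𝒳 (ModuleCat.of R
          ↥(LinearMap.range ((Stmt11Aux.scMk F d hex N i).moduleCatToCycles))) := by
        refine (Stmt11Aux.aux_ses 𝒳 hses (B := F i →ₗ[R] N)
          (LinearMap.ker (LinearMap.lcomp R N (d i))).subtype
          (((Stmt11Aux.scMk F d hex N i).moduleCatToCycles).rangeRestrict : (F i →ₗ[R] N) →ₗ[R] _)
          (Submodule.injective_subtype _)
          (LinearMap.surjective_rangeRestrict ((Stmt11Aux.scMk F d hex N i).moduleCatToCycles))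
          ?_).1 hKi hFree
        rw [Submodule.range_subtype]
        exact hkertc.symm.trans (LinearMap.ker_rangeRestrict _).symm
      have hH : 𝒳 ((Stmt11Aux.scMk F d hex N i).moduleCatLeftHomologyData.H) := by
        refine hiso _ _ ⟨?_⟩ (hext (i + 1) hi)
        exact Stmt11Aux.extIso F d ε hε hex0 hex N (i + 1) ≪≫
          ShortComplex.homologyMapIso (Stmt11Aux.isoSc F d hex N i) ≪≫
          (Stmt11Aux.scMk F d hex N i).moduleCatHomologyIso
      exact (Stmt11Aux.aux_ses 𝒳 hses
        (LinearMap.range ((Stmt11Aux.scMk F d hex N i).moduleCatToCycles)).subtype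
        (LinearMap.range ((Stmt11Aux.scMk F d hex N i).moduleCatToCycles)).mkQ
        (Submodule.injective_subtype _) (Submodule.mkQ_surjective _)
        (by rw [Submodule.range_subtype, Submodule.ker_mkQ])).2.1 hT hH
  constructor
  · exact Stmt11Aux.aux_equiv 𝒳 hiso
      (Stmt11Aux.homEquivKer N ε (d 0) hε (LinearMap.exact_iff.mp hex0)).symm
      (key 0 (Nat.zero_le n))
  · intro i hi
    exact Stmt11Aux.aux_equiv 𝒳 hiso
      (Stmt11Aux.homEquivKer N (d i).rangeRestrict (d (i + 1))
        (LinearMap.surjective_rangeRestrict _)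
        (by rw [LinearMap.ker_rangeRestrict]; exact LinearMap.exact_iff.mp (hex i))).symm
      (key (i + 1) hi)
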